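/- arXiv:1502.06092 — 7 statements merged into one kernel-verified Lean document; each statement's English description precedes it below -/
import Mathlib

section
/- Let V be a finite-dimensional real vector space and H a smooth linear action of the multiplicative monoid (ℝ,·) on V. Then for every r ∈ ℕ the endomorphism Q_r := (1/r!) · H⁽ʳ⁾(0) is idempotent: Q_r ∘ Q_r = Q_r. -/
open ContinuousLinearMap

private lemma clm_iteratedDeriv {F G : Type*} [NormedAddCommGroup F] [NormedSpace ℝ F]
    [NormedAddCommGroup G] [NormedSpace ℝ G] (g : F →L[ℝ] G) {f : ℝ → F}
    (hf : ContDiff ℝ (⊤ : ℕ∞) f) (n : ℕ) (x : ℝ) :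
    iteratedDeriv n (fun t => g (f t)) x = g (iteratedDeriv n f x) := by
  have h := g.iteratedFDeriv_comp_left (hf.contDiffAt (x := x)) (i := n) (by exact_mod_cast le_top)
  rw [iteratedDeriv_eq_iteratedFDeriv, iteratedDeriv_eq_iteratedFDeriv,
    show (fun t => g (f t)) = g ∘ f from rfl, h]
  rfl

private lemma pow_iteratedDeriv : ∀ n : ℕ, iteratedDeriv n (fun s : ℝ => s ^ n) 0
    = (n.factorial : ℝ) := by
  intro n
  induction n with
  | zero => simp
  | succ n ih =>
    rw [iteratedDeriv_succ']
    have hd : deriv (fun s : ℝ => s ^ (n + 1)) = fun s => ((n : ℝ) + 1) * s ^ n := by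
      funext s; simp [deriv_pow_field]
    rw [hd]
    have := iteratedDerivWithin_const_mul (𝕜 := ℝ) (Set.mem_univ (0:ℝ)) uniqueDiffOn_univ
      ((n : ℝ) + 1) (f := fun s : ℝ => s ^ n) (contDiff_id.pow n).contDiffWithinAt (n := n)
    rw [← iteratedDerivWithin_univ, this, iteratedDerivWithin_univ, ih,
      Nat.factorial_succ]
    push_cast
    ring

/-- Let `V` be a finite-dimensional real vector space and `H` a smooth
linear action of the multiplicative monoid `(ℝ, ·)` on `V`. Then for every `r ∈ ℕ` the
endomorphism `Q_r := (1/r!) • H⁽ʳ⁾(0)` is idempotent: `Q_r ∘ Q_r = Q_r`. -/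
theorem monoid_action_Qr_idempotent
    {V : Type*} [NormedAddCommGroup V] [NormedSpace ℝ V] [FiniteDimensional ℝ V]
    (H : ℝ → (V →L[ℝ] V))
    (hsmooth : ContDiff ℝ (⊤ : ℕ∞) (fun p : ℝ × V => H p.1 p.2))
    (hone : H 1 = ContinuousLinearMap.id ℝ V)
    (hmul : ∀ t s : ℝ, H (t * s) = (H t).comp (H s)) :
    ∀ r : ℕ,
      (((r.factorial : ℝ))⁻¹ • iteratedDeriv r H 0).comp
          (((r.factorial : ℝ))⁻¹ • iteratedDeriv r H 0) =
        ((r.factorial : ℝ))⁻¹ • iteratedDeriv r H 0 := by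
  intro r
  have hH : ContDiff ℝ (⊤ : ℕ∞) H := by
    rw [contDiff_clm_apply_iff]
    intro v
    exact hsmooth.comp (contDiff_id.prodMk contDiff_const)
  set D := iteratedDeriv r H 0 with hD
  have key : ∀ s : ℝ, s ^ r • D = D.comp (H s) := by
    intro s
    have h1 : iteratedDeriv r (fun t => H (s * t)) 0 = s ^ r • D := by
      rw [iteratedDeriv_comp_const_smul (hH.of_le (by exact_mod_cast le_top)) s]
      simp [hD]
    have h2 : iteratedDeriv r (fun t => H (s * t)) 0 = D.comp (H s) := by
      have heq : (fun t => H (s * t)) = fun t => ((compL ℝ V V V).flip (H s)) (H t) := by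
        funext t
        simp [mul_comm s t, hmul t s]
      rw [heq, clm_iteratedDeriv _ hH r 0]
      rfl
    rw [← h1, h2]
  have main : (r.factorial : ℝ) • D = D.comp D := by
    have h1 : iteratedDeriv r (fun s : ℝ => s ^ r • D) 0 = (r.factorial : ℝ) • D := by
      have heq : (fun s : ℝ => s ^ r • D)
          = fun s => ((ContinuousLinearMap.id ℝ ℝ).smulRight D) (s ^ r) := by
        funext s; simp
      have hp : ContDiff ℝ (⊤ : ℕ∞) (fun s : ℝ => s ^ r) := by
        simpa using contDiff_id.pow (𝕜 := ℝ) (E := ℝ) r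
      rw [heq, clm_iteratedDeriv _ hp r 0, pow_iteratedDeriv r]
      simp
    have h2 : iteratedDeriv r (fun s : ℝ => D.comp (H s)) 0 = D.comp D := by
      rw [show (fun s : ℝ => D.comp (H s)) = fun s => (compL ℝ V V V D) (H s) from rfl,
        clm_iteratedDeriv _ hH r 0]
      rfl
    rw [← h1, ← h2]
    congr 1
    exact funext key
  have hfac : (r.factorial : ℝ) ≠ 0 := Nat.cast_ne_zero.mpr r.factorial_ne_zero
  rw [ContinuousLinearMap.smul_comp, ContinuousLinearMap.comp_smul, ← main,
    smul_smul, smul_smul]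
  congr 1
  field_simp
end

section
/- Let V be a finite-dimensional real vector space and H a smooth linear action of the multiplicative monoid (ℝ,·) on V. Then there exists k ∈ ℕ such that H⁽ʳ⁾(0) = 0 for all r > k. -/
/-- Let `V` be a finite-dimensional real vector space and `H` a smooth
linear action of the multiplicative monoid `(ℝ, ·)` on `V`. Then there exists `k ∈ ℕ`
such that `H⁽ʳ⁾(0) = 0` for all `r > k`. -/
theorem monoid_action_derivs_eventually_zero
    {V : Type*} [NormedAddCommGroup V] [NormedSpace ℝ V] [FiniteDimensional ℝ V]
    (H : ℝ → (V →L[ℝ] V))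
    (hsmooth : ContDiff ℝ (⊤ : ℕ∞) (fun p : ℝ × V => H p.1 p.2))
    (hone : H 1 = ContinuousLinearMap.id ℝ V)
    (hmul : ∀ t s : ℝ, H (t * s) = (H t).comp (H s)) :
    ∃ k : ℕ, ∀ r : ℕ, k < r → iteratedDeriv r H 0 = 0 := by
  classical
  -- `H` is smooth as a curve into the CLM space
  have hH : ContDiff ℝ (⊤ : ℕ∞) H := by
    rw [contDiff_clm_apply_iff]
    intro v
    exact hsmooth.comp (ContDiff.prodMk contDiff_id contDiff_const)
  set A : ℕ → (V →L[ℝ] V) := fun r => iteratedDeriv r H 0 with hA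
  -- key relation : H t ∘ A r = t ^ r • A r
  have key : ∀ (t : ℝ) (r : ℕ), (H t).comp (A r) = t ^ r • A r := by
    intro t r
    have h1 : iteratedDeriv r (fun s => H (t * s)) 0 = t ^ r • A r := by
      have := iteratedDeriv_comp_const_smul (f := H) (n := r)
        (hH.of_le (by exact_mod_cast le_top)) t
      have h0 := congrFun this 0
      simpa using h0
    have h2 : iteratedDeriv r (fun s => H (t * s)) 0
        = (H t).comp (A r) := by
      have hfun : (fun s => H (t * s))
          = (ContinuousLinearMap.compL ℝ V V V (H t)) ∘ H := by
        funext s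
        simp [hmul t s, Function.comp]
      rw [hfun]
      rw [iteratedDeriv_eq_iteratedFDeriv,
        (ContinuousLinearMap.compL ℝ V V V (H t)).iteratedFDeriv_comp_left (hH.contDiffAt (x := 0)) (by exact_mod_cast le_top)]
      rfl
    rw [← h1, h2]
  -- eigenvalue argument with T = H 2
  have heig : ∀ r : ℕ, A r ≠ 0 →
      Module.End.HasEigenvalue ((H 2).toLinearMap : Module.End ℝ V) ((2 : ℝ) ^ r) := by
    intro r hr
    obtain ⟨v, hv⟩ : ∃ v, A r v ≠ 0 := by
      by_contra h
      push_neg at h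
      exact hr (ContinuousLinearMap.ext fun v => by simpa using h v)
    refine Module.End.hasEigenvalue_of_hasEigenvector (x := A r v) ⟨?_, hv⟩
    have := congrArg (fun (L : V →L[ℝ] V) => L v) (key 2 r)
    simp only [ContinuousLinearMap.comp_apply, ContinuousLinearMap.smul_apply] at this
    rw [Module.End.mem_eigenspace_iff]
    simpa using this
  -- finiteness
  have hfin : {r : ℕ | A r ≠ 0}.Finite := by
    have hinj : Set.InjOn (fun r : ℕ => (2 : ℝ) ^ r) {r : ℕ | A r ≠ 0} := by
      intro a _ b _ hab
      exact (pow_right_strictMono₀ (one_lt_two : (1:ℝ) < 2)).injective hab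
    have hsub : (fun r : ℕ => (2 : ℝ) ^ r) '' {r : ℕ | A r ≠ 0}
        ⊆ {μ | Module.End.HasEigenvalue ((H 2).toLinearMap : Module.End ℝ V) μ} := by
      rintro μ ⟨r, hr, rfl⟩
      exact heig r hr
    exact Set.Finite.of_finite_image
      ((Module.End.finite_hasEigenvalue ((H 2).toLinearMap)).subset hsub) hinj
  obtain ⟨k, hk⟩ := hfin.bddAbove
  refine ⟨k, fun r hkr => ?_⟩
  by_contra hne
  exact absurd (hk (show r ∈ {r : ℕ | A r ≠ 0} from hne)) (not_le.mpr hkr)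
end

section
/- Let V be a finite-dimensional real vector space and H a smooth linear action of the multiplicative monoid (ℝ,·) on V. Then there exist k ∈ ℕ and linear endomorphisms Q₀, Q₁, …, Q_k of V such that: each Q_i is idempotent; Q_i ∘ Q_j = 0 for i ≠ j; Q₀ + Q₁ + ⋯ + Q_k = id; and H(t) = Σ_{i=0}^{k} tⁱ · Q_i for every t ∈ ℝ. In particular V decomposes as the direct sum of the ranges E_i of the Q_i, and H(t) v = tⁱ v for every v ∈ E_i and t ∈ ℝ. -/
open Set

section AuxLemmas

variable {F G : Type*} [NormedAddCommGroup F] [NormedSpace ℝ F]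
  [NormedAddCommGroup G] [NormedSpace ℝ G]

private lemma aux_iteratedDeriv_clm (g : F →L[ℝ] G) {f : ℝ → F} (hf : ContDiff ℝ (⊤ : ℕ∞) f)
    (n : ℕ) (x : ℝ) :
    iteratedDeriv n (fun t => g (f t)) x = g (iteratedDeriv n f x) := by
  rw [iteratedDeriv_eq_iteratedFDeriv, iteratedDeriv_eq_iteratedFDeriv,
    show (fun t => g (f t)) = (⇑g ∘ f) from rfl,
    g.iteratedFDeriv_comp_left (hf.contDiffAt (x := x)) (by exact_mod_cast le_top)]
  rfl

private lemma aux_iteratedDerivWithin {s : Set ℝ} (hs : UniqueDiffOn ℝ s)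
    {f : ℝ → F} (hf : ContDiff ℝ (⊤ : ℕ∞) f) {x : ℝ} (hx : x ∈ s) (n : ℕ) :
    iteratedDerivWithin n f s x = iteratedDeriv n f x := by
  rw [iteratedDerivWithin_eq_iteratedFDerivWithin, iteratedDeriv_eq_iteratedFDeriv]
  congr 1
  have h1 : HasFTaylorSeriesUpToOn ((⊤ : ℕ∞) : WithTop ℕ∞) f (ftaylorSeries ℝ f) univ := by
    have := (contDiffOn_univ.mpr hf).ftaylorSeriesWithin uniqueDiffOn_univ
    rwa [ftaylorSeriesWithin_univ] at this
  exact ((h1.mono (subset_univ s)).eq_iteratedFDerivWithin_of_uniqueDiffOn (by exact_mod_cast le_top) hs hx).symm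

private lemma aux_iteratedDeriv_pow (i : ℕ) :
    ∀ n : ℕ, iteratedDeriv n (fun s : ℝ => s ^ i)
      = fun s : ℝ => (i.descFactorial n : ℝ) * s ^ (i - n) := by
  intro n
  induction n with
  | zero => simp
  | succ n ih =>
    rw [iteratedDeriv_succ, ih]
    funext x
    rw [deriv_const_mul _ (differentiableAt_pow _), deriv_pow_field]
    rw [Nat.descFactorial_succ, Nat.cast_mul]
    rw [show i - n - 1 = i - (n + 1) from by omega]
    ring

private lemma aux_iteratedDeriv_monomial (i n : ℕ) (c : F) :
    iteratedDeriv n (fun s : ℝ => s ^ i • c) 0 = (if n = i then (i.factorial : ℝ) else 0) • c := by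
  have hg : (fun s : ℝ => s ^ i • c)
      = fun s : ℝ => (ContinuousLinearMap.id ℝ ℝ).smulRight c (s ^ i) := by
    funext s; simp
  have hf : ContDiff ℝ (⊤ : ℕ∞) (fun s : ℝ => s ^ i) := contDiff_id.pow i
  rw [hg, aux_iteratedDeriv_clm _ hf n 0]
  rw [aux_iteratedDeriv_pow]
  rcases lt_trichotomy n i with h | h | h
  · simp only [if_neg h.ne]
    rw [zero_pow (by omega : i - n ≠ 0)]
    simp
  · subst h
    simp [Nat.descFactorial_self]
  · rw [Nat.descFactorial_eq_zero_iff_lt.mpr h]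
    simp [if_neg h.ne']

end AuxLemmas

set_option maxHeartbeats 1600000
set_option synthInstance.maxHeartbeats 1000000

/-- Let `V` be a finite-dimensional real vector space and `H` a smooth
linear action of the multiplicative monoid `(ℝ, ·)` on `V`. Then there exist `k ∈ ℕ` and
endomorphisms `Q₀, …, Q_k` of `V` such that each `Q_i` is idempotent, `Q_i ∘ Q_j = 0`
for `i ≠ j`, `Q₀ + ⋯ + Q_k = id`, and `H t = ∑ i, tⁱ • Q_i` for every `t`.  In particular
`V` is the (internal) direct sum of the ranges `E_i` of the `Q_i`, and `H t v = tⁱ • v`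
for every `v ∈ E_i` and every `t ∈ ℝ`. -/
theorem monoid_action_spectral_decomposition
    {V : Type*} [NormedAddCommGroup V] [NormedSpace ℝ V] [FiniteDimensional ℝ V]
    (H : ℝ → (V →L[ℝ] V))
    (hsmooth : ContDiff ℝ (⊤ : ℕ∞) (fun p : ℝ × V => H p.1 p.2))
    (hone : H 1 = ContinuousLinearMap.id ℝ V)
    (hmul : ∀ t s : ℝ, H (t * s) = (H t).comp (H s)) :
    ∃ (k : ℕ) (Q : ℕ → (V →L[ℝ] V)),
      (∀ i ≤ k, (Q i).comp (Q i) = Q i) ∧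
      (∀ i ≤ k, ∀ j ≤ k, i ≠ j → (Q i).comp (Q j) = 0) ∧
      (∑ i ∈ Finset.range (k + 1), Q i) = ContinuousLinearMap.id ℝ V ∧
      (∀ t : ℝ, H t = ∑ i ∈ Finset.range (k + 1), t ^ i • Q i) ∧
      DirectSum.IsInternal (fun i : Fin (k + 1) => LinearMap.range (Q i : V →ₗ[ℝ] V)) ∧
      (∀ i ≤ k, ∀ v ∈ LinearMap.range (Q i : V →ₗ[ℝ] V), ∀ t : ℝ, H t v = t ^ i • v) := by
  -- `H` is smooth as a map into the endomorphism algebra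
  have hH : ContDiff ℝ (⊤ : ℕ∞) H := by
    rw [contDiff_clm_apply_iff]
    intro v
    exact hsmooth.comp (contDiff_id.prodMk contDiff_const)
  have hmul' : ∀ t s : ℝ, H (t * s) = H t * H s := hmul
  have hone' : H 1 = 1 := hone
  set D : ℕ → (V →L[ℝ] V) := fun n => iteratedDeriv n H 0 with hD
  -- key identities by differentiating the functional equation
  have keyR : ∀ (s : ℝ) (n : ℕ), D n * H s = s ^ n • D n := by
    intro s n
    have e1 : (fun t : ℝ => H (s * t))
        = fun t => ((ContinuousLinearMap.mul ℝ (V →L[ℝ] V)).flip (H s)) (H t) := by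
      funext t
      show H (s * t) = H t * H s
      rw [mul_comm]; exact hmul' t s
    have l1 := congrFun (iteratedDeriv_comp_const_smul (n := n) (hH.of_le (by exact_mod_cast le_top)) s) 0
    rw [e1, aux_iteratedDeriv_clm _ hH n 0, mul_zero] at l1
    simpa using l1
  have keyL : ∀ (s : ℝ) (n : ℕ), H s * D n = s ^ n • D n := by
    intro s n
    have e1 : (fun t : ℝ => H (s * t))
        = fun t => ((ContinuousLinearMap.mul ℝ (V →L[ℝ] V)) (H s)) (H t) := by
      funext t
      exact hmul' s t
    have l1 := congrFun (iteratedDeriv_comp_const_smul (n := n) (hH.of_le (by exact_mod_cast le_top)) s) 0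
    rw [e1, aux_iteratedDeriv_clm _ hH n 0, mul_zero] at l1
    simpa using l1
  -- orthogonality of the derivatives
  have Dorth : ∀ i j : ℕ, D i * D j = if j = i then (i.factorial : ℝ) • D i else 0 := by
    intro i j
    have e1 : (fun s : ℝ => ((ContinuousLinearMap.mul ℝ (V →L[ℝ] V)) (D i)) (H s))
        = fun s : ℝ => s ^ i • D i := by
      funext s; exact keyR s i
    have l1 := aux_iteratedDeriv_clm ((ContinuousLinearMap.mul ℝ (V →L[ℝ] V)) (D i)) hH j 0
    rw [e1, aux_iteratedDeriv_monomial i j (D i)] at l1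
    have : D i * D j = (if j = i then (i.factorial : ℝ) else 0) • D i := l1.symm
    rw [this, ite_smul, zero_smul]
  set A : ℕ → (V →L[ℝ] V) := fun n => ((n.factorial : ℝ))⁻¹ • D n with hA
  have hfac : ∀ n : ℕ, (n.factorial : ℝ) ≠ 0 :=
    fun n => Nat.cast_ne_zero.mpr n.factorial_ne_zero
  have hDA : ∀ n : ℕ, D n = (n.factorial : ℝ) • A n := by
    intro n; rw [hA]; simp [smul_smul, mul_inv_cancel₀ (hfac n)]
  have Aorth : ∀ i j : ℕ, A i * A j = if i = j then A i else 0 := by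
    intro i j
    rw [hA]
    simp only [smul_mul_assoc, mul_smul_comm, Dorth i j]
    by_cases h : i = j
    · subst h
      simp [smul_smul, hfac i, mul_comm, mul_assoc, inv_mul_cancel₀ (hfac i)]
    · rw [if_neg (fun hh => h hh.symm), if_neg h]
      simp
  have hAH : ∀ (i : ℕ) (t : ℝ), A i * H t = t ^ i • A i := by
    intro i t
    rw [hA, smul_mul_assoc, keyR t i, smul_comm]
  have hHA : ∀ (i : ℕ) (t : ℝ), H t * A i = t ^ i • A i := by
    intro i t
    rw [hA, mul_smul_comm, keyL t i, smul_comm]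
  -- only finitely many of the `A i` are nonzero
  have hfin : {i : ℕ | A i ≠ 0}.Finite := by
    have li : LinearIndependent ℝ (fun i : {i : ℕ // A i ≠ 0} => A i.val) := by
      rw [linearIndependent_iff']
      intro s g hsum j hj
      have h2 : (∑ i ∈ s, g i • A i.val) * A j.val = 0 := by rw [hsum, zero_mul]
      rw [Finset.sum_mul] at h2
      have h3 : ∀ i ∈ s, (g i • A i.val) * A j.val = if i = j then g i • A i.val else 0 := by
        intro i _
        rw [smul_mul_assoc, Aorth]
        by_cases h : i = j
        · rw [if_pos (by rw [h]), if_pos h, h]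
        · rw [if_neg (fun hh => h (Subtype.ext hh)), if_neg h, smul_zero]
      rw [Finset.sum_congr rfl h3, Finset.sum_ite_eq' s j _, if_pos hj] at h2
      rcases smul_eq_zero.mp h2 with h | h
      · exact h
      · exact absurd h j.prop
    have h4 : Finite {i : ℕ // A i ≠ 0} := li.finite
    rw [show {i : ℕ | A i ≠ 0} = {i : ℕ | A i ≠ 0} from rfl, ← Set.finite_coe_iff]
    exact h4
  obtain ⟨k, hk⟩ := hfin.bddAbove
  have Avanish : ∀ i : ℕ, k < i → A i = 0 := by
    intro i hi
    by_contra h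
    exact absurd (hk h) (by omega)
  -- the complementary projection
  set P : V →L[ℝ] V := 1 - ∑ i ∈ Finset.range (k + 1), A i with hP
  have AP : ∀ n : ℕ, A n * P = 0 := by
    intro n
    by_cases hn : n ≤ k
    · rw [hP, mul_sub, mul_one, Finset.mul_sum]
      have h1 : ∀ j ∈ Finset.range (k + 1), A n * A j = if j = n then A j else 0 := by
        intro j _
        rw [Aorth]
        by_cases h : n = j
        · rw [if_pos h, if_pos h.symm, h]
        · rw [if_neg h, if_neg fun hh => h hh.symm]
      rw [Finset.sum_congr rfl h1, Finset.sum_ite_eq' _ n _,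
        if_pos (Finset.mem_range.mpr (by omega)), sub_self]
    · rw [Avanish n (by omega), zero_mul]
  have PA : ∀ n : ℕ, P * A n = 0 := by
    intro n
    by_cases hn : n ≤ k
    · rw [hP, sub_mul, one_mul, Finset.sum_mul]
      have h1 : ∀ j ∈ Finset.range (k + 1), A j * A n = if j = n then A j else 0 := by
        intro j _; exact Aorth j n
      rw [Finset.sum_congr rfl h1, Finset.sum_ite_eq' _ n _,
        if_pos (Finset.mem_range.mpr (by omega)), sub_self]
    · rw [Avanish n (by omega), mul_zero]
  have PP : P * P = P := by
    nth_rewrite 1 [hP]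
    rw [sub_mul, one_mul, Finset.sum_mul,
      Finset.sum_congr rfl (fun i _ => AP i), Finset.sum_const_zero, sub_zero]
  have comm : ∀ t : ℝ, H t * P = P * H t := by
    intro t
    rw [hP, mul_sub, sub_mul, mul_one, one_mul, Finset.mul_sum, Finset.sum_mul]
    congr 1
    exact Finset.sum_congr rfl fun i _ => by rw [hAH, hHA]
  set K : ℝ → (V →L[ℝ] V) := fun t => H t * P with hK
  have hKsmooth : ContDiff ℝ (⊤ : ℕ∞) K := hH.mul contDiff_const
  have Kone : K 1 = P := by
    show H 1 * P = P
    rw [hone', one_mul]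
  have Kmul : ∀ a b : ℝ, K (a * b) = K a * K b := by
    intro a b
    show H (a * b) * P = H a * P * (H b * P)
    rw [hmul' a b, mul_assoc (H a) P (H b * P), ← mul_assoc P (H b) P, ← comm b,
      mul_assoc (H b) P P, PP, ← mul_assoc (H a) (H b) P]
  have Kflat : ∀ n : ℕ, iteratedDeriv n K 0 = 0 := by
    intro n
    have e1 : K = fun t => ((ContinuousLinearMap.mul ℝ (V →L[ℝ] V)).flip P) (H t) := rfl
    rw [e1, aux_iteratedDeriv_clm _ hH n 0]
    show D n * P = 0
    rw [hDA n, smul_mul_assoc, AP n, smul_zero]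
  have Kbound : ∀ m : ℕ, ‖K ((2 : ℝ) ^ m)‖ ≤ ‖P‖ * ‖H 2‖ ^ m := by
    intro m
    induction m with
    | zero => simp [Kone]
    | succ m ih =>
      have e : ((2 : ℝ) ^ (m + 1)) = 2 * 2 ^ m := by ring
      have e2 : K (2 * 2 ^ m) = H 2 * K ((2 : ℝ) ^ m) := by
        show H (2 * 2 ^ m) * P = H 2 * (H ((2 : ℝ) ^ m) * P)
        rw [hmul', mul_assoc]
      calc ‖K ((2 : ℝ) ^ (m + 1))‖ = ‖H 2 * K ((2 : ℝ) ^ m)‖ := by rw [e, e2]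
        _ ≤ ‖H 2‖ * ‖K ((2 : ℝ) ^ m)‖ := norm_mul_le _ _
        _ ≤ ‖H 2‖ * (‖P‖ * ‖H 2‖ ^ m) := by gcongr
        _ = ‖P‖ * ‖H 2‖ ^ (m + 1) := by ring
  have Ksmall : ∀ n : ℕ, ∃ C : ℝ, 0 ≤ C ∧ ∀ x ∈ Icc (0 : ℝ) 1, ‖K x‖ ≤ C * x ^ (n + 1) := by
    intro n
    have hcd : ContDiffOn ℝ ((n : WithTop ℕ∞) + 1) K (Icc 0 1) :=
      (hKsmooth.of_le (by exact_mod_cast le_top)).contDiffOn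
    obtain ⟨C, hC⟩ := exists_taylor_mean_remainder_bound zero_le_one hcd
    refine ⟨max C 0, le_max_right C 0, fun x hx => ?_⟩
    have ht : taylorWithinEval K n (Icc 0 1) 0 x = 0 := by
      rw [taylor_within_apply]
      apply Finset.sum_eq_zero
      intro j _
      rw [aux_iteratedDerivWithin (uniqueDiffOn_Icc zero_lt_one) hKsmooth
        (left_mem_Icc.mpr zero_le_one) j, Kflat j, smul_zero]
    have h1 := hC x hx
    rw [ht, sub_zero, sub_zero] at h1
    calc ‖K x‖ ≤ C * x ^ (n + 1) := h1
      _ ≤ max C 0 * x ^ (n + 1) := by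
          have hx0 : (0:ℝ) ≤ x := hx.1
          gcongr
          exact le_max_left C 0
  have Pzero : P = 0 := by
    obtain ⟨n, hn⟩ := pow_unbounded_of_one_lt (‖H 2‖) (one_lt_two (α := ℝ))
    obtain ⟨C, hC0, hC⟩ := Ksmall n
    have key : ∀ m : ℕ, ‖P‖ ≤ (C * ‖P‖) * (‖H 2‖ / 2 ^ (n + 1)) ^ m := by
      intro m
      have h1 : ((2 : ℝ)⁻¹) ^ m * 2 ^ m = 1 := by
        rw [← mul_pow]; norm_num
      have h2 : P = K (((2 : ℝ)⁻¹) ^ m) * K ((2 : ℝ) ^ m) := by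
        rw [← Kmul, h1, Kone]
      have h3 : ‖K (((2 : ℝ)⁻¹) ^ m)‖ ≤ C * (((2 : ℝ)⁻¹) ^ m) ^ (n + 1) := by
        apply hC
        constructor
        · positivity
        · exact pow_le_one₀ (by norm_num) (by norm_num)
      calc ‖P‖ ≤ ‖K (((2 : ℝ)⁻¹) ^ m)‖ * ‖K ((2 : ℝ) ^ m)‖ := by
            rw [h2]; exact norm_mul_le _ _
        _ ≤ (C * (((2 : ℝ)⁻¹) ^ m) ^ (n + 1)) * (‖P‖ * ‖H 2‖ ^ m) :=
            mul_le_mul h3 (Kbound m) (norm_nonneg _) (by positivity)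
        _ = (C * ‖P‖) * (‖H 2‖ / 2 ^ (n + 1)) ^ m := by
            rw [div_eq_mul_inv, mul_pow, ← inv_pow, ← pow_mul, ← pow_mul, mul_comm m (n + 1)]
            ring
    have hr0 : (0 : ℝ) ≤ ‖H 2‖ / 2 ^ (n + 1) := by positivity
    have hr1 : ‖H 2‖ / 2 ^ (n + 1) < 1 := by
      rw [div_lt_one (by positivity)]
      calc ‖H 2‖ < 2 ^ n := hn
        _ < 2 ^ (n + 1) := by
          exact pow_lt_pow_right₀ one_lt_two (lt_add_one n)
    have hlim : Filter.Tendsto (fun m : ℕ => (C * ‖P‖) * (‖H 2‖ / 2 ^ (n + 1)) ^ m)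
        Filter.atTop (nhds 0) := by
      rw [show (0 : ℝ) = (C * ‖P‖) * 0 from (mul_zero _).symm]
      exact (tendsto_pow_atTop_nhds_zero_of_lt_one hr0 hr1).const_mul _
    have hle : ‖P‖ ≤ 0 := ge_of_tendsto hlim (Filter.Eventually.of_forall key)
    exact norm_le_zero_iff.mp hle
  have sumA : ∑ i ∈ Finset.range (k + 1), A i = 1 := by
    have h1 := Pzero
    rw [hP, sub_eq_zero] at h1
    exact h1.symm
  have Hform : ∀ t : ℝ, H t = ∑ i ∈ Finset.range (k + 1), t ^ i • A i := by
    intro t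
    have h1 : H t = H t * (∑ i ∈ Finset.range (k + 1), A i) := by rw [sumA, mul_one]
    rw [h1, Finset.mul_sum]
    exact Finset.sum_congr rfl fun i _ => hHA i t
  refine ⟨k, A, ?_, ?_, ?_, ?_, ?_, ?_⟩
  · intro i _
    have h := Aorth i i
    rw [if_pos rfl] at h
    exact h
  · intro i _ j _ hij
    have h := Aorth i j
    rw [if_neg hij] at h
    exact h
  · exact sumA
  · exact Hform
  · rw [DirectSum.isInternal_submodule_iff_iSupIndep_and_iSup_eq_top]
    constructor
    · intro i
      rw [disjoint_iff_inf_le]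
      intro v hv
      rw [Submodule.mem_inf] at hv
      obtain ⟨hv1, hv2⟩ := hv
      have hker : (⨆ j, ⨆ (_ : j ≠ i), LinearMap.range (A ((j : Fin (k + 1)) : ℕ) : V →ₗ[ℝ] V))
          ≤ LinearMap.ker (A (i : ℕ) : V →ₗ[ℝ] V) := by
        apply iSup_le
        intro j
        apply iSup_le
        intro hj
        rintro w hw
        obtain ⟨u, rfl⟩ := hw
        rw [LinearMap.mem_ker]
        have h := Aorth (i : ℕ) (j : ℕ)
        rw [if_neg (fun hh => hj (Fin.ext hh.symm))] at h
        have h2 := DFunLike.congr_fun h u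
        simpa using h2
      obtain ⟨w, hw⟩ := hv1
      have h5 : A (i : ℕ) v = 0 := hker hv2
      have h6 : A (i : ℕ) v = v := by
        rw [← hw]
        have h := Aorth (i : ℕ) (i : ℕ)
        rw [if_pos rfl] at h
        exact DFunLike.congr_fun h w
      rw [Submodule.mem_bot, ← h6, h5]
    · rw [eq_top_iff]
      intro v _
      have hv : v = ∑ i ∈ Finset.range (k + 1), A i v := by
        have h := DFunLike.congr_fun sumA v
        simpa using h.symm
      rw [hv, ← Fin.sum_univ_eq_sum_range (fun i => A i v) (k + 1)]
      apply Submodule.sum_mem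
      intro i _
      exact Submodule.mem_iSup_of_mem i ⟨v, rfl⟩
  · rintro i hik v hv t
    obtain ⟨w, rfl⟩ := hv
    rw [Hform t, ContinuousLinearMap.sum_apply]
    have h1 : ∀ j ∈ Finset.range (k + 1),
        (t ^ j • A j) (A i w) = if j = i then t ^ i • (A i) w else 0 := by
      intro j _
      rw [ContinuousLinearMap.smul_apply]
      by_cases hji : j = i
      · subst hji
        have h := Aorth j j
        rw [if_pos rfl] at h
        rw [if_pos rfl]
        congr 1
        have h2 := DFunLike.congr_fun h w
        simpa using h2
      · have h := Aorth j i
        rw [if_neg hji] at h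
        have h2 := DFunLike.congr_fun h w
        simp only [ContinuousLinearMap.mul_apply, ContinuousLinearMap.zero_apply] at h2
        rw [if_neg hji, h2, smul_zero]
    rw [ContinuousLinearMap.coe_coe]
    rw [Finset.sum_congr rfl h1, Finset.sum_ite_eq' _ i _,
      if_pos (Finset.mem_range.mpr (by omega))]
end

section
/- Let V be a finite-dimensional real vector space and H a smooth linear action of the multiplicative monoid (ℝ,·) on V. Then the infinitesimal generator A := H′(1) (the derivative of t ↦ H(t) at t = 1) is diagonalizable with all eigenvalues nonnegative integers; that is, V admits a basis consisting of eigenvectors of A whose eigenvalues lie in ℕ. -/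
open NormedSpace Nat Set

section MonoidActionAux

variable {E : Type*} [NormedAddCommGroup E] [NormedSpace ℝ E]
variable {F : Type*} [NormedAddCommGroup F] [NormedSpace ℝ F]

lemma iteratedDeriv_clm_comp (g : E →L[ℝ] F) {f : ℝ → E} (hf : ContDiff ℝ (⊤ : ℕ∞) f) (n : ℕ) :
    iteratedDeriv n (fun t => g (f t)) = fun x => g (iteratedDeriv n f x) := by
  induction n with
  | zero => simp
  | succ n ih =>
    funext x
    rw [iteratedDeriv_succ, iteratedDeriv_succ, ih]
    exact (g.hasFDerivAt.comp_hasDerivAt x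
      ((hf.differentiable_iteratedDeriv n
        (by exact_mod_cast lt_top_iff_ne_top.mpr (by simp : (n:ℕ∞) ≠ ⊤))).differentiableAt.hasDerivAt)).deriv

lemma prod_range_sub_eq_factorial (k : ℕ) :
    (∏ i ∈ Finset.range k, ((k : ℝ) - i)) = (k ! : ℝ) := by
  rw [← Finset.prod_range_reflect]
  have : ∀ j ∈ Finset.range k, ((k : ℝ) - (k - 1 - j : ℕ)) = ((j + 1 : ℕ) : ℝ) := by
    intro j hj
    rw [Finset.mem_range] at hj
    have : k - 1 - j = k - (j + 1) := by omega
    rw [this, Nat.cast_sub (by omega)]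
    push_cast
    ring
  rw [Finset.prod_congr rfl this, ← Nat.cast_prod, Finset.prod_range_add_one_eq_factorial]

lemma iteratedDeriv_pow_zero (j k : ℕ) :
    iteratedDeriv j (fun t : ℝ => t ^ k) 0 = if j = k then (k ! : ℝ) else 0 := by
  rw [iteratedDeriv_eq_iterate, iter_deriv_pow]
  rcases eq_or_ne j k with rfl | hjk
  · simp [prod_range_sub_eq_factorial]
  · rcases lt_or_gt_of_ne hjk with h | h
    · rw [if_neg hjk, zero_pow (by omega), mul_zero]
    · rw [if_neg hjk]
      have : ((k : ℝ) - k) = 0 := by ring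
      rw [Finset.prod_eq_zero (Finset.mem_range.mpr h) this, zero_mul]

lemma norm_exp_le_exp_norm' {A : Type*} [NormedRing A] [NormOneClass A] [NormedAlgebra ℝ A]
    [CompleteSpace A] (x : A) : ‖NormedSpace.exp x‖ ≤ Real.exp ‖x‖ := by
  rw [NormedSpace.exp_eq_tsum (𝕂 := ℝ)]
  have hs : Summable fun n : ℕ => ‖(n !⁻¹ : ℝ) • x ^ n‖ :=
    (NormedSpace.norm_expSeries_summable' x)
  calc ‖∑' n : ℕ, (n !⁻¹ : ℝ) • x ^ n‖ ≤ ∑' n : ℕ, ‖(n !⁻¹ : ℝ) • x ^ n‖ :=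
        norm_tsum_le_tsum_norm hs
    _ ≤ ∑' n : ℕ, ‖x‖ ^ n / n ! := by
        refine Summable.tsum_le_tsum (fun n => ?_) hs (Real.summable_pow_div_factorial ‖x‖)
        rw [norm_smul, norm_inv, Real.norm_natCast, div_eq_inv_mul]
        gcongr
        cases n with
        | zero => simp
        | succ n => exact norm_pow_le' x n.succ_pos
    _ = Real.exp ‖x‖ := by rw [Real.exp_eq_exp_ℝ, NormedSpace.exp_eq_tsum_div]

/-- flatness bound -/
lemma flat_bound (N : ℕ) :
    ∀ {g : ℝ → E}, ContDiff ℝ (⊤ : ℕ∞) g → (∀ j ≤ N, iteratedDeriv j g 0 = 0) →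
      ∃ C : ℝ, 0 ≤ C ∧ ∀ t ∈ Icc (0:ℝ) 1, ‖g t‖ ≤ C * t ^ N := by
  induction N with
  | zero =>
    intro g hg _
    obtain ⟨C, hC⟩ := (isCompact_Icc (a := (0:ℝ)) (b := 1)).exists_bound_of_continuousOn
      hg.continuous.continuousOn
    refine ⟨max C 0, le_max_right _ _, fun t ht => ?_⟩
    rw [pow_zero, mul_one]
    exact (hC t ht).trans (le_max_left _ _)
  | succ N ih =>
    intro g hg h0
    have hg' : ContDiff ℝ (⊤ : ℕ∞) (deriv g) := (contDiff_infty_iff_deriv.mp hg).2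
    obtain ⟨C, hC0, hC⟩ := ih hg' (fun j hj => by
      rw [← iteratedDeriv_succ']
      exact h0 (j + 1) (by omega))
    refine ⟨C, hC0, fun t ht => ?_⟩
    have key := image_norm_le_of_norm_deriv_right_le_deriv_boundary
      (f := g) (f' := deriv g) (a := 0) (b := 1)
      hg.continuous.continuousOn
      (fun x _ => ((hg.differentiable (by simp) x).hasDerivAt).hasDerivWithinAt)
      (B := fun t => C / (N + 1) * t ^ (N + 1)) (B' := fun t => C * t ^ N)
      (by
        have hg0 : g 0 = 0 := by simpa [iteratedDeriv_zero] using h0 0 (by omega)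
        simp [hg0])
      (fun x => by
        have h1 : HasDerivAt (fun t : ℝ => t ^ (N + 1)) ((N + 1 : ℕ) * x ^ N) x := by
          simpa using hasDerivAt_pow (N + 1) x
        have := h1.const_mul (C / (N + 1))
        refine this.congr_deriv ?_
        push_cast
        field_simp)
      (fun x hx => hC x ⟨hx.1, hx.2.le⟩)
    have := key ht
    calc ‖g t‖ ≤ C / (N + 1) * t ^ (N + 1) := this
      _ ≤ C * t ^ (N + 1) := by
          have h2 : C / (N + 1) ≤ C := div_le_self hC0 (by exact_mod_cast Nat.le_add_left 1 N)
          exact mul_le_mul_of_nonneg_right h2 (pow_nonneg ht.1 _)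

end MonoidActionAux

set_option maxHeartbeats 1000000
set_option synthInstance.maxHeartbeats 1000000

/-- Let `V` be a finite-dimensional real vector space and `H` a smooth
linear action of the multiplicative monoid `(ℝ, ·)` on `V`. Then the infinitesimal
generator `A := H′(1)` is diagonalizable with all eigenvalues nonnegative integers:
`V` admits a basis of eigenvectors of `A` whose eigenvalues lie in `ℕ`. -/
theorem monoid_action_generator_diagonalizable
    {V : Type*} [NormedAddCommGroup V] [NormedSpace ℝ V] [FiniteDimensional ℝ V]
    (H : ℝ → (V →L[ℝ] V))
    (hsmooth : ContDiff ℝ (⊤ : ℕ∞) (fun p : ℝ × V => H p.1 p.2))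
    (hone : H 1 = ContinuousLinearMap.id ℝ V)
    (hmul : ∀ t s : ℝ, H (t * s) = (H t).comp (H s)) :
    ∃ (n : ℕ) (b : Module.Basis (Fin n) ℝ V) (μ : Fin n → ℕ),
      ∀ i : Fin n, deriv H 1 (b i) = (μ i : ℝ) • b i := by
  rcases subsingleton_or_nontrivial V with hV | hV
  · exact ⟨0, Module.Basis.empty _, fun i => i.elim0, fun i => i.elim0⟩
  -- abbreviations
  have honeE : H 1 = (1 : V →L[ℝ] V) := hone
  have hmulE : ∀ t s : ℝ, H (t * s) = H t * H s := hmul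
  -- smoothness of `H` as a curve in the operator algebra
  have hH : ContDiff ℝ (⊤ : ℕ∞) H := by
    rw [contDiff_clm_apply_iff]
    intro v
    exact (hsmooth.of_le (by simp)).comp (contDiff_id.prodMk contDiff_const)
  have hD : ∀ t : ℝ, HasDerivAt H (deriv H t) t := fun t =>
    ((hH.differentiable (by simp)) t).hasDerivAt
  set A := deriv H 1 with hA
  -- the two basic differential identities
  have id1 : ∀ s : ℝ, s • deriv H s = A * H s := by
    intro s
    have e1 : HasDerivAt (fun t : ℝ => H (t * s)) (s • deriv H s) 1 := by
      have h2 : HasDerivAt (fun t : ℝ => t * s) s 1 := by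
        simpa using (hasDerivAt_id (1:ℝ)).mul_const s
      simpa [one_mul, Function.comp_def] using (hD (1 * s)).scomp 1 h2
    have e2 : HasDerivAt (fun t : ℝ => H t * H s) (A * H s) 1 := (hD 1).mul_const (H s)
    have : (fun t : ℝ => H (t * s)) = fun t : ℝ => H t * H s := funext fun t => hmulE t s
    rw [this] at e1
    exact e1.unique e2
  have id2 : ∀ t : ℝ, t • deriv H t = H t * A := by
    intro t
    have e1 : HasDerivAt (fun s : ℝ => H (t * s)) (t • deriv H t) 1 := by
      have h2 : HasDerivAt (fun s : ℝ => t * s) t 1 := by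
        simpa using (hasDerivAt_id (1:ℝ)).const_mul t
      simpa [mul_one, Function.comp_def] using (hD (t * 1)).scomp 1 h2
    have e2 : HasDerivAt (fun s : ℝ => H t * H s) (H t * A) 1 := (hD 1).const_mul (H t)
    have : (fun s : ℝ => H (t * s)) = fun s : ℝ => H t * H s := funext fun s => hmulE t s
    rw [this] at e1
    exact e1.unique e2
  -- Taylor coefficients at 0
  set C : ℕ → (V →L[ℝ] V) := fun k => iteratedDeriv k H 0 with hCdef
  have hHn : ∀ n : ℕ, ContDiff ℝ (n : ℕ∞) H := fun n => hH.of_le (by exact_mod_cast le_top)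
  have hR1 : ∀ (t : ℝ) (k : ℕ), H t * C k = t ^ k • C k := by
    intro t k
    have lhs := congrFun (iteratedDeriv_clm_comp
      (ContinuousLinearMap.mul ℝ (V →L[ℝ] V) (H t)) hH k) 0
    have rhs := congrFun (iteratedDeriv_comp_const_smul (hHn k) t) 0
    have hfe : (fun s : ℝ => (ContinuousLinearMap.mul ℝ (V →L[ℝ] V) (H t)) (H s))
        = fun s : ℝ => H (t * s) := by
      funext s
      simp [ContinuousLinearMap.mul_apply', (hmulE t s).symm]
    rw [hfe] at lhs
    rw [lhs] at rhs
    simpa [ContinuousLinearMap.mul_apply'] using rhs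
  have hR2 : ∀ (s : ℝ) (k : ℕ), C k * H s = s ^ k • C k := by
    intro s k
    have lhs := congrFun (iteratedDeriv_clm_comp
      ((ContinuousLinearMap.mul ℝ (V →L[ℝ] V)).flip (H s)) hH k) 0
    have rhs := congrFun (iteratedDeriv_comp_const_smul (hHn k) s) 0
    have hfe : (fun t : ℝ => ((ContinuousLinearMap.mul ℝ (V →L[ℝ] V)).flip (H s)) (H t))
        = fun t : ℝ => H (s * t) := by
      funext t
      simp only [ContinuousLinearMap.flip_apply, ContinuousLinearMap.mul_apply']
      rw [← hmulE t s, mul_comm]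
    rw [hfe] at lhs
    rw [lhs] at rhs
    simpa [ContinuousLinearMap.flip_apply, ContinuousLinearMap.mul_apply'] using rhs
  -- orthogonality of Taylor coefficients
  have hCC : ∀ j k : ℕ, C j * C k = (if j = k then (k ! : ℝ) else 0) • C k := by
    intro j k
    have hfe : (fun t : ℝ => ((ContinuousLinearMap.mul ℝ (V →L[ℝ] V)).flip (C k)) (H t))
        = fun t : ℝ => (ContinuousLinearMap.toSpanSingleton ℝ (C k)) (t ^ k) := by
      funext t
      simp only [ContinuousLinearMap.flip_apply, ContinuousLinearMap.mul_apply',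
        ContinuousLinearMap.toSpanSingleton_apply]
      exact hR1 t k
    have lhs := congrFun (iteratedDeriv_clm_comp
      ((ContinuousLinearMap.mul ℝ (V →L[ℝ] V)).flip (C k)) hH j) 0
    have rhs := congrFun (iteratedDeriv_clm_comp
      (ContinuousLinearMap.toSpanSingleton ℝ (C k)) (contDiff_id.pow k) j) 0
    rw [hfe] at lhs
    have key := lhs.symm.trans rhs
    simp only [ContinuousLinearMap.flip_apply, ContinuousLinearMap.mul_apply',
      ContinuousLinearMap.toSpanSingleton_apply, id_eq, iteratedDeriv_pow_zero] at key
    exact key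
  -- action of A on Taylor coefficients
  have hAC : ∀ k : ℕ, A * C k = (k : ℝ) • C k := by
    intro k
    have e2 : HasDerivAt (fun t : ℝ => H t * C k) (A * C k) 1 := (hD 1).mul_const (C k)
    have e3 : HasDerivAt (fun t : ℝ => t ^ k • C k) ((k : ℝ) • C k) 1 := by
      simpa using (hasDerivAt_pow k (1:ℝ)).smul_const (C k)
    have hfe : (fun t : ℝ => H t * C k) = fun t : ℝ => t ^ k • C k := funext fun t => hR1 t k
    rw [hfe] at e2
    exact e2.unique e3
  -- normalized idempotents
  set Q : ℕ → (V →L[ℝ] V) := fun k => ((k ! : ℝ))⁻¹ • C k with hQdef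
  have hfac : ∀ k : ℕ, (k ! : ℝ) ≠ 0 := fun k => Nat.cast_ne_zero.mpr (Nat.factorial_ne_zero k)
  have hCQ : ∀ k : ℕ, C k = (k ! : ℝ) • Q k := by
    intro k
    rw [hQdef]
    simp only [smul_smul, mul_inv_cancel₀ (hfac k), one_smul]
  have hQQ : ∀ j k : ℕ, Q j * Q k = if j = k then Q k else 0 := by
    intro j k
    have expand : Q j * Q k
        = ((j ! : ℝ))⁻¹ • ((k ! : ℝ))⁻¹ • ((if j = k then (k ! : ℝ) else 0) • C k) := by
      rw [hQdef]
      simp only [smul_mul_assoc, mul_smul_comm, hCC]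
      module
    rcases eq_or_ne j k with rfl | hjk
    · rw [expand, if_pos rfl, if_pos rfl, hQdef]
      simp only [smul_smul]
      congr 1
      field_simp
    · rw [expand, if_neg hjk, if_neg hjk]
      simp
  have hAQ : ∀ k : ℕ, A * Q k = (k : ℝ) • Q k := by
    intro k
    rw [hQdef]
    simp only [mul_smul_comm, hAC]
    rw [smul_comm]
  have hHQ : ∀ (t : ℝ) (k : ℕ), H t * Q k = t ^ k • Q k := by
    intro t k
    rw [hQdef]
    simp only [mul_smul_comm, hR1]
    rw [smul_comm]
  have hQH : ∀ (t : ℝ) (k : ℕ), Q k * H t = t ^ k • Q k := by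
    intro t k
    rw [hQdef]
    simp only [smul_mul_assoc, hR2]
    rw [smul_comm]
  -- finiteness of the support of Q
  have hSfin : {k : ℕ | Q k ≠ 0}.Finite := by
    have li : LinearIndependent ℝ (fun k : {k : ℕ | Q k ≠ 0} => Q k) := by
      apply Module.End.eigenvectors_linearIndependent' (LinearMap.mulLeft ℝ A)
        (fun k : {k : ℕ | Q k ≠ 0} => ((k : ℕ) : ℝ))
        (fun a b hab => Subtype.ext (Nat.cast_injective hab))
      intro k
      refine ⟨Module.End.mem_eigenspace_iff.mpr ?_, k.2⟩
      simpa [LinearMap.mulLeft_apply] using hAQ k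
    haveI : Finite {k : ℕ | Q k ≠ 0} := li.finite
    exact Set.toFinite _
  set K : Finset ℕ := hSfin.toFinset with hKdef
  have hKmem : ∀ k : ℕ, k ∈ K ↔ Q k ≠ 0 := by
    intro k
    rw [hKdef, Set.Finite.mem_toFinset, Set.mem_setOf_eq]
  set R : V →L[ℝ] V := 1 - ∑ k ∈ K, Q k with hRdef
  have hQR : ∀ k : ℕ, Q k * R = 0 := by
    intro k
    rw [hRdef, mul_sub, mul_one, Finset.mul_sum]
    have : ∀ j ∈ K, Q k * Q j = if j = k then Q k else 0 := by
      intro j _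
      rw [hQQ k j]
      by_cases h : k = j
      · subst h; simp
      · simp [h, Ne.symm h]
    rw [Finset.sum_congr rfl this, Finset.sum_ite_eq' K k (fun _ => Q k)]
    by_cases hk : k ∈ K
    · rw [if_pos hk, sub_self]
    · rw [if_neg hk, sub_zero]
      by_contra h
      exact hk ((hKmem k).mpr (fun h0 => h (by rw [h0])))
  have hCR : ∀ k : ℕ, C k * R = 0 := by
    intro k
    rw [hCQ k, smul_mul_assoc, hQR, smul_zero]
  have hcomm : ∀ t : ℝ, H t * R = R * H t := by
    intro t
    rw [hRdef, mul_sub, sub_mul, mul_one, one_mul, Finset.mul_sum, Finset.sum_mul]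
    congr 1
    exact Finset.sum_congr rfl fun k _ => by rw [hHQ, hQH]
  -- the flat part
  set G : ℝ → (V →L[ℝ] V) := fun t => H t * R with hGdef
  have hGsmooth : ContDiff ℝ (⊤ : ℕ∞) G := by
    have : G = fun t => ((ContinuousLinearMap.mul ℝ (V →L[ℝ] V)).flip R) (H t) := by
      funext t
      simp [hGdef, ContinuousLinearMap.flip_apply, ContinuousLinearMap.mul_apply']
    rw [this]
    exact (((ContinuousLinearMap.mul ℝ (V →L[ℝ] V)).flip R).contDiff).comp hH
  have hGflat : ∀ j : ℕ, iteratedDeriv j G 0 = 0 := by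
    intro j
    have lhs := congrFun (iteratedDeriv_clm_comp
      ((ContinuousLinearMap.mul ℝ (V →L[ℝ] V)).flip R) hH j) 0
    have hfe : (fun t : ℝ => ((ContinuousLinearMap.mul ℝ (V →L[ℝ] V)).flip R) (H t)) = G := by
      funext t
      simp [hGdef, ContinuousLinearMap.flip_apply, ContinuousLinearMap.mul_apply']
    rw [hfe] at lhs
    rw [lhs]
    simpa [ContinuousLinearMap.flip_apply, ContinuousLinearMap.mul_apply'] using hCR j
  -- growth bound via the exponential
  have hexp : ∀ x : ℝ, H (Real.exp x) = NormedSpace.exp (x • A) := by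
    have hcA : ∀ x : ℝ, A * NormedSpace.exp (x • A) = NormedSpace.exp (x • A) * A := fun x =>
      ((hasDerivAt_exp_smul_const' A x).unique (hasDerivAt_exp_smul_const A x)).symm ▸ rfl
    have hcA' : ∀ x : ℝ, NormedSpace.exp (x • (-A)) * A = A * NormedSpace.exp (x • (-A)) := by
      intro x
      have := (hasDerivAt_exp_smul_const' (-A) x).unique (hasDerivAt_exp_smul_const (-A) x)
      calc NormedSpace.exp (x • (-A)) * A = -(NormedSpace.exp (x • (-A)) * (-A)) := by noncomm_ring
        _ = -((-A) * NormedSpace.exp (x • (-A))) := by rw [← this]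
        _ = A * NormedSpace.exp (x • (-A)) := by noncomm_ring
    set f : ℝ → (V →L[ℝ] V) := fun x => NormedSpace.exp (x • (-A)) * H (Real.exp x) with hfdef
    have hf' : ∀ x : ℝ, HasDerivAt f 0 x := by
      intro x
      have hu : HasDerivAt (fun x : ℝ => NormedSpace.exp (x • (-A))) ((-A) * NormedSpace.exp (x • (-A))) x :=
        hasDerivAt_exp_smul_const' (-A) x
      have hv0 : HasDerivAt (fun x : ℝ => H (Real.exp x))
          (Real.exp x • deriv H (Real.exp x)) x :=
        (hD (Real.exp x)).scomp x (Real.hasDerivAt_exp x)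
      have hv : HasDerivAt (fun x : ℝ => H (Real.exp x)) (A * H (Real.exp x)) x := by
        rwa [id1 (Real.exp x)] at hv0
      have := hu.mul hv
      refine this.congr_deriv ?_
      have hflip : NormedSpace.exp (x • (-A)) * (A * H (Real.exp x))
          = A * (NormedSpace.exp (x • (-A)) * H (Real.exp x)) := by
        rw [← mul_assoc, hcA' x, mul_assoc]
      rw [hflip]
      noncomm_ring
    have hfconst : ∀ x : ℝ, f x = f 0 :=
      fun x => is_const_of_deriv_eq_zero (fun y => (hf' y).differentiableAt)
        (fun y => (hf' y).deriv) x 0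
    intro x
    have h0 : f 0 = 1 := by
      rw [hfdef]
      simp [Real.exp_zero, honeE]
    have hx := (hfconst x).trans h0
    have hinv : NormedSpace.exp (x • A) * NormedSpace.exp (x • (-A)) = 1 := by
      letI : NormedAlgebra ℚ (V →L[ℝ] V) := NormedAlgebra.restrictScalars ℚ ℝ _
      rw [← NormedSpace.exp_add_of_commute]
      · simp
      · rw [smul_neg]
        exact (Commute.refl (x • A)).neg_right
    calc H (Real.exp x) = (NormedSpace.exp (x • A) * NormedSpace.exp (x • (-A))) * H (Real.exp x) := by
          rw [hinv, one_mul]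
      _ = NormedSpace.exp (x • A) * f x := by rw [hfdef, mul_assoc]
      _ = NormedSpace.exp (x • A) := by rw [hx, mul_one]
  have hnormH : ∀ x : ℝ, ‖H (Real.exp x)‖ ≤ Real.exp (|x| * ‖A‖) := by
    intro x
    rw [hexp x]
    calc ‖NormedSpace.exp (x • A)‖ ≤ Real.exp ‖x • A‖ := norm_exp_le_exp_norm' _
      _ = Real.exp (|x| * ‖A‖) := by
          congr 1
          rw [show ‖x • A‖ = ‖x‖ * ‖A‖ from norm_smul x A, Real.norm_eq_abs]
  -- the remainder `R` vanishes
  obtain ⟨N, hN⟩ := exists_nat_ge (‖A‖ + 1)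
  obtain ⟨Cb, hCb0, hCb⟩ := flat_bound N hGsmooth (fun j _ => hGflat j)
  have hR0 : R = 0 := by
    ext v
    rw [ContinuousLinearMap.zero_apply, ← norm_le_zero_iff]
    have hb : ∀ n : ℕ, ‖R v‖ ≤ Cb * Real.exp (-(n:ℝ)) * ‖v‖ := by
      intro n
      set t : ℝ := Real.exp (-(n:ℝ)) with htdef
      have ht0 : 0 < t := Real.exp_pos _
      have ht1 : t ≤ 1 := Real.exp_le_one_iff.mpr (neg_nonpos.mpr (Nat.cast_nonneg n))
      have hid : R = G t * H (Real.exp (n:ℝ)) := by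
        have h1 : t * Real.exp (n:ℝ) = 1 := by
          rw [htdef, ← Real.exp_add]
          simp
        calc R = R * H 1 := by rw [honeE, mul_one]
          _ = R * (H t * H (Real.exp (n:ℝ))) := by rw [← hmulE, h1]
          _ = (R * H t) * H (Real.exp (n:ℝ)) := by rw [mul_assoc]
          _ = (H t * R) * H (Real.exp (n:ℝ)) := by rw [hcomm]
          _ = G t * H (Real.exp (n:ℝ)) := rfl
      have hGt : ‖G t‖ ≤ Cb * t ^ N := hCb t ⟨ht0.le, ht1⟩
      have hHn' : ‖H (Real.exp (n:ℝ))‖ ≤ Real.exp ((n:ℝ) * ‖A‖) := by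
        simpa [abs_of_nonneg (by positivity : (0:ℝ) ≤ (n:ℝ))] using hnormH (n:ℝ)
      have hstep : t ^ N * Real.exp ((n:ℝ) * ‖A‖) ≤ Real.exp (-(n:ℝ)) := by
        rw [htdef, ← Real.exp_nat_mul, ← Real.exp_add]
        apply Real.exp_le_exp.mpr
        have h1 : (‖A‖ + 1) ≤ (N:ℝ) := hN
        nlinarith [Nat.cast_nonneg (α := ℝ) n, norm_nonneg A]
      calc ‖R v‖ = ‖(G t * H (Real.exp (n:ℝ))) v‖ := by rw [← hid]
        _ ≤ ‖G t * H (Real.exp (n:ℝ))‖ * ‖v‖ := ContinuousLinearMap.le_opNorm _ _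
        _ ≤ (‖G t‖ * ‖H (Real.exp (n:ℝ))‖) * ‖v‖ := by
            gcongr
            exact norm_mul_le _ _
        _ ≤ ((Cb * t ^ N) * Real.exp ((n:ℝ) * ‖A‖)) * ‖v‖ := by
            gcongr
        _ = (Cb * (t ^ N * Real.exp ((n:ℝ) * ‖A‖))) * ‖v‖ := by ring
        _ ≤ Cb * Real.exp (-(n:ℝ)) * ‖v‖ := by
            gcongr
    have hlim : Filter.Tendsto (fun n : ℕ => Cb * Real.exp (-(n:ℝ)) * ‖v‖)
        Filter.atTop (nhds (Cb * 0 * ‖v‖)) := by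
      apply Filter.Tendsto.mul_const
      apply Filter.Tendsto.const_mul
      exact (Real.tendsto_exp_neg_atTop_nhds_zero).comp tendsto_natCast_atTop_atTop
    have := ge_of_tendsto' hlim hb
    simpa using this
  have hsum : (1 : V →L[ℝ] V) = ∑ k ∈ K, Q k := by
    have h1 : (1 : V →L[ℝ] V) - ∑ k ∈ K, Q k = 0 := by rw [← hRdef]; exact hR0
    exact sub_eq_zero.mp h1
  -- eigenspace decomposition
  set A' : Module.End ℝ V := (A : V →ₗ[ℝ] V) with hA'def
  have hmemeig : ∀ (k : ℕ) (v : V), Q k v ∈ Module.End.eigenspace A' (k : ℝ) := by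
    intro k v
    rw [Module.End.mem_eigenspace_iff]
    have : (A * Q k) v = ((k : ℝ) • Q k) v := by rw [hAQ k]
    simp [ContinuousLinearMap.mul_apply] at this
    exact this
  have hsup : (⨆ k : ℕ, Module.End.eigenspace A' (k : ℝ)) = ⊤ := by
    rw [eq_top_iff]
    intro v _
    have hv : v = ∑ k ∈ K, Q k v := by
      have : (1 : V →L[ℝ] V) v = (∑ k ∈ K, Q k) v := by rw [← hsum]
      simpa [ContinuousLinearMap.sum_apply] using this
    rw [hv]
    exact Submodule.sum_mem _ fun k _ =>
      Submodule.mem_iSup_of_mem k (hmemeig k v)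
  have hind : iSupIndep (fun k : ℕ => Module.End.eigenspace A' (k : ℝ)) :=
    (Module.End.eigenspaces_iSupIndep A').comp Nat.cast_injective
  have hInternal : DirectSum.IsInternal (fun k : ℕ => Module.End.eigenspace A' (k : ℝ)) :=
    (DirectSum.isInternal_submodule_iff_iSupIndep_and_iSup_eq_top _).mpr ⟨hind, hsup⟩
  set bs : ∀ k : ℕ, Module.Basis (Fin (Module.finrank ℝ (Module.End.eigenspace A' (k:ℝ)))) ℝ
      (Module.End.eigenspace A' (k:ℝ)) := fun k => Module.finBasis ℝ _ with hbsdef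
  set b0 := hInternal.collectedBasis bs with hb0def
  haveI : Fintype (Σ k : ℕ, Fin (Module.finrank ℝ (Module.End.eigenspace A' (k:ℝ)))) :=
    FiniteDimensional.fintypeBasisIndex b0
  set e := Fintype.equivFin
    (Σ k : ℕ, Fin (Module.finrank ℝ (Module.End.eigenspace A' (k:ℝ)))) with hedef
  refine ⟨_, b0.reindex e, fun i => (e.symm i).1, fun i => ?_⟩
  rw [Module.Basis.reindex_apply]
  have hmem : (b0 (e.symm i) : V) ∈ Module.End.eigenspace A' (((e.symm i).1 : ℕ) : ℝ) := by
    have hcoe := congrFun (hInternal.collectedBasis_coe bs) (e.symm i)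
    rw [hcoe]
    exact Submodule.coe_mem _
  exact Module.End.mem_eigenspace_iff.mp hmem
end

section
/- Every smooth function φ : ℝ → ℝ satisfying φ(t·s) = φ(t)·φ(s) for all t, s ∈ ℝ is either identically zero or of the form φ(t) = tᵏ for some natural number k. -/
open Filter Real Finset

private lemma prod_sub_cast_eq_factorial (k : ℕ) :
    (∏ i ∈ Finset.range k, ((k : ℝ) - (i : ℝ))) = (k.factorial : ℝ) := by
  have h := Finset.prod_range_reflect (fun i => ((k : ℝ) - (i : ℝ))) k
  rw [← h]
  have : ∀ j ∈ Finset.range k, ((k : ℝ) - ((k - 1 - j : ℕ) : ℝ)) = ((j + 1 : ℕ) : ℝ) := by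
    intro j hj
    rw [Finset.mem_range] at hj
    have : k - 1 - j = k - (j + 1) := by omega
    rw [this, Nat.cast_sub (by omega)]
    push_cast
    ring
  rw [Finset.prod_congr rfl this, ← Nat.cast_prod, Finset.prod_range_add_one_eq_factorial]

/-- Every smooth function `φ : ℝ → ℝ` satisfying
`φ (t * s) = φ t * φ s` for all `t, s ∈ ℝ` is either identically zero or of the form
`φ t = t ^ k` for some natural number `k`. -/
theorem smooth_multiplicative_selfmap_is_monomial
    (φ : ℝ → ℝ) (hsmooth : ContDiff ℝ (⊤ : ℕ∞) φ)
    (hmul : ∀ t s : ℝ, φ (t * s) = φ t * φ s) :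
    (∀ t : ℝ, φ t = 0) ∨ ∃ k : ℕ, ∀ t : ℝ, φ t = t ^ k := by
  by_cases h1 : φ 1 = 0
  · left
    intro t
    have h := hmul t 1
    rw [mul_one] at h
    rw [h, h1, mul_zero]
  have hφ1 : φ 1 = 1 := by
    have h := hmul 1 1
    rw [mul_one] at h
    have h2 : φ 1 * (φ 1 - 1) = 0 := by nlinarith
    rcases mul_eq_zero.1 h2 with h' | h'
    · exact absurd h' h1
    · linarith
  by_cases h0 : φ 0 = 0
  swap
  · right
    refine ⟨0, fun t => ?_⟩
    have hφ0 : φ 0 = 1 := by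
      have h2 := hmul 0 0
      rw [mul_zero] at h2
      have h3 : φ 0 * (φ 0 - 1) = 0 := by nlinarith
      rcases mul_eq_zero.1 h3 with h' | h'
      · exact absurd h' h0
      · linarith
    have h := hmul 0 t
    rw [zero_mul, hφ0, one_mul] at h
    rw [← h, pow_zero]
  -- main case : φ 0 = 0
  set c := deriv φ 1 with hc
  have hdiff : Differentiable ℝ φ := hsmooth.differentiable (by simp)
  have hdiffn : ∀ n : ℕ, Differentiable ℝ (iteratedDeriv n φ) := by
    intro n
    exact hsmooth.differentiable_iteratedDeriv n (by exact_mod_cast lt_top_iff_ne_top.2 (by simp))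
  -- the basic ODE t φ'(t) = c φ(t)
  have base : ∀ t : ℝ, t * deriv φ t = c * φ t := by
    intro t
    have hL : HasDerivAt (fun s => φ (t * s)) (deriv φ (t * 1) * (t * 1)) 1 := by
      have hinner : HasDerivAt (fun s : ℝ => t * s) (t * 1) 1 :=
        (hasDerivAt_id 1).const_mul t
      have houter : HasDerivAt φ (deriv φ (t * 1)) (t * 1) := (hdiff (t * 1)).hasDerivAt
      exact houter.comp 1 hinner
    have hR : HasDerivAt (fun s => φ t * φ s) (φ t * deriv φ 1) 1 :=
      ((hdiff 1).hasDerivAt).const_mul (φ t)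
    have hfe : (fun s => φ (t * s)) = fun s => φ t * φ s := funext (hmul t)
    rw [hfe] at hL
    have := hL.unique hR
    rw [mul_one] at this
    rw [← hc] at this
    nlinarith [this]
  -- the recursive ODEs
  have recODE : ∀ n : ℕ, ∀ t : ℝ,
      t * iteratedDeriv (n + 1) φ t = (c - n) * iteratedDeriv n φ t := by
    intro n
    induction n with
    | zero =>
      intro t
      simpa [iteratedDeriv_succ, iteratedDeriv_zero] using base t
    | succ n ih =>
      intro t
      have hfe : (fun t => t * iteratedDeriv (n + 1) φ t)
          = fun t => (c - n) * iteratedDeriv n φ t := funext ih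
      have hd := congrArg (fun f : ℝ → ℝ => deriv f t) hfe
      have dL : deriv (fun t => t * iteratedDeriv (n + 1) φ t) t
          = iteratedDeriv (n + 1) φ t + t * iteratedDeriv (n + 2) φ t := by
        rw [deriv_fun_mul differentiableAt_fun_id ((hdiffn (n + 1)) t), deriv_id'', one_mul,
          ← iteratedDeriv_succ]
      have dR : deriv (fun t => (c - n) * iteratedDeriv n φ t) t
          = (c - n) * iteratedDeriv (n + 1) φ t := by
        rw [deriv_const_mul _ ((hdiffn n) t), ← iteratedDeriv_succ]
      rw [dL, dR] at hd
      push_cast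
      linarith [hd]
  -- the closed formula t^n φ⁽ⁿ⁾(t) = K_n φ(t)
  have G : ∀ n : ℕ, ∀ t : ℝ,
      t ^ n * iteratedDeriv n φ t = (∏ i ∈ Finset.range n, (c - i)) * φ t := by
    intro n
    induction n with
    | zero => intro t; simp [iteratedDeriv_zero]
    | succ n ih =>
      intro t
      rw [Finset.prod_range_succ]
      calc t ^ (n + 1) * iteratedDeriv (n + 1) φ t
          = t ^ n * (t * iteratedDeriv (n + 1) φ t) := by ring
        _ = t ^ n * ((c - n) * iteratedDeriv n φ t) := by rw [recODE n t]
        _ = (c - n) * (t ^ n * iteratedDeriv n φ t) := by ring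
        _ = (c - n) * ((∏ i ∈ Finset.range n, (c - i)) * φ t) := by rw [ih t]
        _ = (∏ i ∈ Finset.range n, (c - i)) * (c - n) * φ t := by ring
  by_cases hcnat : ∃ k : ℕ, c = k
  · -- c is a natural number k; then φ t = t ^ k
    obtain ⟨k, hk⟩ := hcnat
    right
    refine ⟨k, fun t => ?_⟩
    have hK0 : (∏ i ∈ Finset.range (k + 1), (c - i)) = 0 :=
      Finset.prod_eq_zero (Finset.self_mem_range_succ k) (by rw [hk, sub_self])
    have hzero : ∀ s : ℝ, s ≠ 0 → iteratedDeriv (k + 1) φ s = 0 := by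
      intro s hs
      have h := G (k + 1) s
      rw [hK0, zero_mul] at h
      exact (mul_eq_zero.1 h).resolve_left (pow_ne_zero _ hs)
    have hzero' : ∀ s : ℝ, iteratedDeriv (k + 1) φ s = 0 := by
      have hcont : Continuous (iteratedDeriv (k + 1) φ) := (hdiffn (k + 1)).continuous
      have heq : Set.EqOn (iteratedDeriv (k + 1) φ) (fun _ => (0 : ℝ)) {(0 : ℝ)}ᶜ :=
        fun x hx => hzero x hx
      have := Continuous.ext_on (dense_compl_singleton (0 : ℝ)) hcont continuous_const heq
      exact fun s => congrFun this s
    have hconst : ∀ s : ℝ, iteratedDeriv k φ s = iteratedDeriv k φ 1 := by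
      intro s
      refine is_const_of_deriv_eq_zero (hdiffn k) (fun x => ?_) s 1
      rw [← iteratedDeriv_succ]
      exact hzero' x
    have hK1 : iteratedDeriv k φ 1 = (k.factorial : ℝ) := by
      have h := G k 1
      rw [hφ1, one_pow, one_mul, mul_one] at h
      rw [h, hk, prod_sub_cast_eq_factorial]
    have h := G k t
    rw [hconst t, hK1, hk, prod_sub_cast_eq_factorial] at h
    have hfac : (k.factorial : ℝ) ≠ 0 := Nat.cast_ne_zero.2 k.factorial_ne_zero
    have h2 : (k.factorial : ℝ) * φ t = (k.factorial : ℝ) * t ^ k := by linarith [h]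
    exact mul_left_cancel₀ hfac h2
  · -- c is not a natural number: contradiction with smoothness at 0
    exfalso
    push_neg at hcnat
    have hODE : ∀ x : ℝ, HasDerivAt (fun x => φ (Real.exp x) * Real.exp (-(c * x))) 0 x := by
      intro x
      have h1 : HasDerivAt (fun x => φ (Real.exp x)) (deriv φ (Real.exp x) * Real.exp x) x :=
        ((hdiff (Real.exp x)).hasDerivAt).comp x (Real.hasDerivAt_exp x)
      have hinner : HasDerivAt (fun x : ℝ => -(c * x)) (-c) x := by
        have := ((hasDerivAt_id x).const_mul c).neg
        simp only [id, mul_one] at this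
        exact this
      have h2 : HasDerivAt (fun x => Real.exp (-(c * x))) (Real.exp (-(c * x)) * (-c)) x :=
        (Real.hasDerivAt_exp _).comp x hinner
      have h3 := h1.mul h2
      have hb := base (Real.exp x)
      refine h3.congr_deriv ?_
      linear_combination (Real.exp (-(c * x))) * hb
    have hconstg : ∀ x : ℝ, φ (Real.exp x) * Real.exp (-(c * x)) = 1 := by
      intro x
      have h := is_const_of_deriv_eq_zero (fun y => (hODE y).differentiableAt)
        (fun y => (hODE y).deriv) x 0
      simpa [hφ1] using h
    have hval : ∀ x : ℝ, φ (Real.exp x) = Real.exp (c * x) := by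
      intro x
      have h := hconstg x
      rw [Real.exp_neg] at h
      field_simp at h
      linarith [h]
    obtain ⟨n, hn⟩ : ∃ n : ℕ, c < n := exists_nat_gt c
    set K := ∏ i ∈ Finset.range n, (c - i) with hKdef
    have hKne : K ≠ 0 :=
      Finset.prod_ne_zero_iff.2 (fun i _ => sub_ne_zero.2 (hcnat i))
    have hform : ∀ x : ℝ, iteratedDeriv n φ (Real.exp x) = K * Real.exp ((c - n) * x) := by
      intro x
      have hG := G n (Real.exp x)
      rw [hval x, ← Real.exp_nat_mul] at hG
      have hne : Real.exp ((n : ℝ) * x) ≠ 0 := Real.exp_ne_zero _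
      have : Real.exp ((c - n) * x) = Real.exp (c * x) / Real.exp ((n : ℝ) * x) := by
        rw [← Real.exp_sub]; ring_nf
      rw [this]
      field_simp
      rw [hKdef, mul_comm x (n : ℝ)]; linear_combination hG
    have hlim1 : Tendsto (fun x => |iteratedDeriv n φ (Real.exp x)|) atBot
        (nhds |iteratedDeriv n φ 0|) := by
      have : Tendsto (fun x => iteratedDeriv n φ (Real.exp x)) atBot
          (nhds (iteratedDeriv n φ 0)) :=
        ((hdiffn n).continuous.tendsto 0).comp Real.tendsto_exp_atBot
      exact this.abs
    have hlim2 : Tendsto (fun x => |iteratedDeriv n φ (Real.exp x)|) atBot atTop := by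
      have heq : (fun x => |iteratedDeriv n φ (Real.exp x)|)
          = fun x => |K| * Real.exp ((c - n) * x) := by
        funext x
        rw [hform x, abs_mul, abs_of_pos (Real.exp_pos _)]
      rw [heq]
      apply Tendsto.const_mul_atTop (abs_pos.2 hKne)
      apply Real.tendsto_exp_atTop.comp
      exact Tendsto.const_mul_atBot_of_neg (by linarith) tendsto_id
    exact not_tendsto_atTop_of_tendsto_nhds hlim1 hlim2
end

section
/- Let g : ℝ → ℝ be a smooth function, c ∈ ℝ with c ≠ 0, and w ∈ ℝ, and suppose g(t) = c·t^w for all t > 0 (where t^w = exp(w·log t)). Then w is a nonnegative integer. -/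
private lemma neg_exponent_case (g : ℝ → ℝ) (hs : Continuous g)
    (c : ℝ) (hc : c ≠ 0) (w : ℝ) (hw : w < 0)
    (hg : ∀ t : ℝ, 0 < t → g t = c * t ^ w) : False := by
  have h1 : Filter.Tendsto (fun t => |g t|) (nhdsWithin 0 (Set.Ioi 0)) (nhds |g 0|) :=
    ((hs.tendsto 0).abs).mono_left nhdsWithin_le_nhds
  have hinv : Filter.Tendsto (fun x : ℝ => x⁻¹) (nhdsWithin 0 (Set.Ioi 0)) Filter.atTop :=
    tendsto_inv_nhdsGT_zero
  have hpow : Filter.Tendsto (fun x : ℝ => x ^ (-w)) Filter.atTop Filter.atTop :=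
    tendsto_rpow_atTop (by linarith)
  have h2 : Filter.Tendsto (fun t : ℝ => |c| * t ^ w) (nhdsWithin 0 (Set.Ioi 0)) Filter.atTop := by
    have h3 : Filter.Tendsto (fun t : ℝ => t ^ w) (nhdsWithin 0 (Set.Ioi 0)) Filter.atTop := by
      refine (hpow.comp hinv).congr' ?_
      filter_upwards [self_mem_nhdsWithin] with t (ht : 0 < t)
      simp only [Function.comp]
      rw [Real.inv_rpow ht.le, Real.rpow_neg ht.le, inv_inv]
    exact h3.const_mul_atTop (abs_pos.mpr hc)
  have h4 : Filter.Tendsto (fun t => |g t|) (nhdsWithin 0 (Set.Ioi 0)) Filter.atTop := by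
    refine h2.congr' ?_
    filter_upwards [self_mem_nhdsWithin] with t (ht : 0 < t)
    rw [hg t ht, abs_mul, abs_of_pos (Real.rpow_pos_of_pos ht w)]
  exact not_tendsto_atTop_of_tendsto_nhds h1 h4

private lemma aux_nat_exponent : ∀ n : ℕ, ∀ g : ℝ → ℝ, ContDiff ℝ (⊤ : ℕ∞) g → ∀ c : ℝ, c ≠ 0 →
    ∀ w : ℝ, (∀ t : ℝ, 0 < t → g t = c * t ^ w) → w ≤ n → ∃ m : ℕ, w = m := by
  intro n
  induction n with
  | zero =>
    intro g hs c hc w hg hw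
    rcases lt_or_eq_of_le hw with h | h
    · exact absurd (neg_exponent_case g hs.continuous c hc w (by exact_mod_cast h) hg) id
    · exact ⟨0, by exact_mod_cast h⟩
  | succ n ih =>
    intro g hs c hc w hg hw
    rcases lt_trichotomy w 0 with h | h | h
    · exact absurd (neg_exponent_case g hs.continuous c hc w h hg) id
    · exact ⟨0, by exact_mod_cast h⟩
    · -- w > 0; differentiate
      have hg' : ∀ t : ℝ, 0 < t → deriv g t = (c * w) * t ^ (w - 1) := by
        intro t ht
        have h1 : HasDerivAt (fun x : ℝ => c * x ^ w) (c * (w * t ^ (w - 1))) t :=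
          (Real.hasDerivAt_rpow_const (Or.inl ht.ne')).const_mul c
        have h2 : HasDerivAt g (c * (w * t ^ (w - 1))) t := by
          refine h1.congr_of_eventuallyEq ?_
          filter_upwards [Ioi_mem_nhds ht] with s (hs' : 0 < s)
          exact hg s hs'
        rw [h2.deriv]; ring
      have hs' : ContDiff ℝ (⊤ : ℕ∞) (deriv g) := by
        have h0 : ContDiff ℝ (((⊤ : ℕ∞) : WithTop ℕ∞) + 1) g := by
          exact hs
        exact (contDiff_succ_iff_deriv.mp h0).2.2
      obtain ⟨m, hm⟩ := ih (deriv g) hs' (c * w) (mul_ne_zero hc h.ne') (w - 1) hg'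
        (by push_cast at hw ⊢; linarith)
      exact ⟨m + 1, by push_cast; linarith⟩

/-- Let `g : ℝ → ℝ` be a smooth function, `c ≠ 0`, and `w ∈ ℝ`, and
suppose `g t = c * t ^ w` for all `t > 0` (real power, `t ^ w = exp (w * log t)`).
Then `w` is a nonnegative integer. -/
theorem smooth_extension_forces_nat_exponent
    (g : ℝ → ℝ) (hsmooth : ContDiff ℝ (⊤ : ℕ∞) g)
    (c : ℝ) (hc : c ≠ 0) (w : ℝ)
    (hg : ∀ t : ℝ, 0 < t → g t = c * t ^ w) :
    ∃ n : ℕ, w = n := by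
  refine aux_nat_exponent ⌈w⌉.toNat g hsmooth c hc w hg ?_
  calc w ≤ (⌈w⌉ : ℝ) := Int.le_ceil w
    _ ≤ ((⌈w⌉.toNat : ℤ) : ℝ) := by exact_mod_cast Int.self_le_toNat ⌈w⌉
    _ = (⌈w⌉.toNat : ℝ) := by push_cast; ring
end

section
/- Let F be a smooth manifold (boundaryless, modeled on a finite-dimensional real vector space) and let h : ℝ × F → F be a smooth map with h(1, x) = x and h(t, h(s, x)) = h(t·s, x) for all t, s ∈ ℝ and x ∈ F (a homogeneity structure). Suppose f : F → ℝ is a smooth function, not identically zero, and w ∈ ℝ is such that f(h(t, x)) = t^w · f(x) for all t > 0 and all x ∈ F. Then w is a nonnegative integer. -/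
open scoped Manifold ContDiff Topology

open Filter Set

/-
Restricted to an orbit `t ↦ h (t, x)` with `f x ≠ 0`, the function `f` becomes a smooth function
on `ℝ` that equals `f x * t ^ w` for `t > 0`. Differentiating `n` times gives a smooth function
equal to `c * t ^ (w - n)` with `c ≠ 0` as long as `w ∉ {0, …, n - 1}`; once `w - n < 0` this
blows up as `t → 0⁺`, contradicting continuity at `0`.
-/

namespace Real

variable {g : ℝ → ℝ} {c w : ℝ}

lemma not_continuousAt_zero_of_eqOn_const_mul_rpow (hc : c ≠ 0) (hw : w < 0)
    (hg : EqOn g (fun t ↦ c * t ^ w) (Ioi 0)) : ¬ ContinuousAt g 0 := by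
  intro hcont
  have h_blowup : Tendsto (fun t ↦ |g t|) (𝓝[>] 0) atTop := by
    refine ((tendsto_rpow_neg_nhdsGT_zero hw).const_mul_atTop (abs_pos.2 hc)).congr' ?_
    filter_upwards [self_mem_nhdsWithin] with t (ht : 0 < t)
    rw [hg ht, abs_mul, abs_of_nonneg (rpow_nonneg ht.le w)]
  exact not_tendsto_nhds_of_tendsto_atTop h_blowup _
    (hcont.abs.tendsto.mono_left nhdsWithin_le_nhds)

lemma eqOn_deriv_of_eqOn_const_mul_rpow (hg : EqOn g (fun t ↦ c * t ^ w) (Ioi 0)) :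
    EqOn (deriv g) (fun t ↦ c * w * t ^ (w - 1)) (Ioi 0) := by
  intro t (ht : 0 < t)
  have hg_near : g =ᶠ[𝓝 t] fun s ↦ c * s ^ w := eventually_of_mem (Ioi_mem_nhds ht) hg
  rw [hg_near.deriv_eq, deriv_const_mul _ (differentiableAt_rpow_const_of_ne w ht.ne'),
    deriv_rpow_const]
  exact (mul_assoc c w _).symm

theorem exists_nat_eq_of_contDiff_of_eqOn_const_mul_rpow (hg : ContDiff ℝ ∞ g) (hc : c ≠ 0)
    (hgw : EqOn g (fun t ↦ c * t ^ w) (Ioi 0)) : ∃ n : ℕ, w = n := by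
  obtain ⟨n, hn⟩ := exists_nat_gt w
  induction n generalizing g c w with
  | zero =>
    exact absurd hg.continuous.continuousAt
      (not_continuousAt_zero_of_eqOn_const_mul_rpow hc (by exact_mod_cast hn) hgw)
  | succ n ih =>
    rcases eq_or_ne w 0 with rfl | hw
    · exact ⟨0, Nat.cast_zero.symm⟩
    obtain ⟨m, hm⟩ := ih (contDiff_infty_iff_deriv.mp hg).2 (mul_ne_zero hc hw)
      (eqOn_deriv_of_eqOn_const_mul_rpow hgw) (by push_cast at hn; linarith)
    exact ⟨m + 1, by push_cast; linarith⟩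

end Real

theorem homogeneous_function_degree_is_nat_general
    {E : Type*} [NormedAddCommGroup E] [NormedSpace ℝ E]
    {F : Type*} [TopologicalSpace F] [ChartedSpace E F]
    (h : ℝ × F → F)
    (hsmooth : ContMDiff ((modelWithCornersSelf ℝ ℝ).prod (modelWithCornersSelf ℝ E))
      (modelWithCornersSelf ℝ E) (⊤ : ℕ∞) h)
    (f : F → ℝ)
    (hf : ContMDiff (modelWithCornersSelf ℝ E) (modelWithCornersSelf ℝ ℝ) (⊤ : ℕ∞) f)
    (hf0 : ∃ x : F, f x ≠ 0)
    (w : ℝ)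
    (hhom : ∀ (t : ℝ), 0 < t → ∀ x : F, f (h (t, x)) = t ^ w * f x) :
    ∃ n : ℕ, w = n := by
  obtain ⟨x, hx⟩ := hf0
  have h_orbit : ContDiff ℝ ∞ fun t ↦ f (h (t, x)) :=
    contMDiff_iff_contDiff.mp (hf.comp (hsmooth.comp (contMDiff_id.prodMk contMDiff_const)))
  refine Real.exists_nat_eq_of_contDiff_of_eqOn_const_mul_rpow h_orbit hx fun t ht ↦ ?_
  rw [hhom t ht x, mul_comm]

/-- Let `F` be a smooth (boundaryless) manifold modeled on a
finite-dimensional real vector space `E` and let `h : ℝ × F → F` be a smooth action of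
the multiplicative monoid `(ℝ, ·)` (a homogeneity structure): `h 1 x = x` and
`h t (h s x) = h (t * s) x`. If `f : F → ℝ` is a smooth function, not identically zero,
and `w ∈ ℝ` satisfies `f (h t x) = t ^ w * f x` for all `t > 0` and all `x`, then `w`
is a nonnegative integer. -/
theorem homogeneous_function_degree_is_nat
    {E : Type*} [NormedAddCommGroup E] [NormedSpace ℝ E] [FiniteDimensional ℝ E]
    {F : Type*} [TopologicalSpace F] [ChartedSpace E F]
    [IsManifold (modelWithCornersSelf ℝ E) (⊤ : ℕ∞) F]
    (h : ℝ × F → F)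
    (hsmooth : ContMDiff ((modelWithCornersSelf ℝ ℝ).prod (modelWithCornersSelf ℝ E))
      (modelWithCornersSelf ℝ E) (⊤ : ℕ∞) h)
    (hone : ∀ x : F, h (1, x) = x)
    (hact : ∀ (t s : ℝ) (x : F), h (t, h (s, x)) = h (t * s, x))
    (f : F → ℝ)
    (hf : ContMDiff (modelWithCornersSelf ℝ E) (modelWithCornersSelf ℝ ℝ) (⊤ : ℕ∞) f)
    (hf0 : ∃ x : F, f x ≠ 0)
    (w : ℝ)
    (hhom : ∀ (t : ℝ), 0 < t → ∀ x : F, f (h (t, x)) = t ^ w * f x) :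
    ∃ n : ℕ, w = n :=
  homogeneous_function_degree_is_nat_general h hsmooth f hf hf0 w hhom
end
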